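/- arXiv:1602.01176 — 2 statements merged into one kernel-verified Lean document; each statement's English description precedes it below -/
import Mathlib

section
/- Let S = ⟨Ags, E, P, Φ_κ⟩ be a sound local proposition epistemic protocol specification such that for every x ∈ Vars(P), the formula κ(x) contains knowledge operators and the branching operator A only in positive position. Let X₁, …, X_k be a partition of Vars(P), let θ be a total substitution, and let 𝓘₀ ⊇ 𝓘₁ ⊇ … ⊇ 𝓘_k be interpreted systems over the states of E with 𝓘_k = 𝓘(E, Pθ), such that for each j = 1, …, k and each x ∈ X_j, 𝓘_{j-1} ⊨ AG(θ(x) ⇔ κ(x)θ). Then θ is an implementation of S, i.e., 𝓘(E,Pθ) ⊨ AG(θ(x) ⇒ κ(x)θ) for every x ∈ Vars(P). -/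
namespace EpiSyn

/-- Syntax of CTL*K over atomic propositions `P` and agents `A`. -/
inductive Formula (P A : Type) : Type
  | atom  : P → Formula P A
  | neg   : Formula P A → Formula P A
  | or    : Formula P A → Formula P A → Formula P A
  | next  : Formula P A → Formula P A
  | untl  : Formula P A → Formula P A → Formula P A
  | all   : Formula P A → Formula P A
  | know  : A → Formula P A → Formula P A

/-- An interpreted system over global states `S`: a set of runs, an
indistinguishability relation on points for each agent (an equivalence
relation on points of the system), and an interpretation of propositions. -/
structure IS (S P A : Type) where
  runs : Set (ℕ → S)
  sim  : A → ((ℕ → S) × ℕ) → ((ℕ → S) × ℕ) → Prop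
  intp : S → Set P
  sim_refl : ∀ i r m, r ∈ runs → sim i (r, m) (r, m)
  sim_symm : ∀ i p q, p.1 ∈ runs → q.1 ∈ runs → sim i p q → sim i q p
  sim_trans : ∀ i p q u, p.1 ∈ runs → q.1 ∈ runs → u.1 ∈ runs →
      sim i p q → sim i q u → sim i p u

variable {S P A : Type}

/-- Bundle semantics of CTL*K at a point `(r, m)` of an interpreted system. -/
def sat (I : IS S P A) : Formula P A → (ℕ → S) → ℕ → Prop
  | .atom p, r, m => p ∈ I.intp (r m)
  | .neg φ, r, m => ¬ sat I φ r m
  | .or φ ψ, r, m => sat I φ r m ∨ sat I ψ r m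
  | .next φ, r, m => sat I φ r (m + 1)
  | .untl φ ψ, r, m =>
      ∃ m', m ≤ m' ∧ sat I ψ r m' ∧ ∀ k, m ≤ k → k < m' → sat I φ r k
  | .all φ, r, m => ∀ r' ∈ I.runs, (∀ k, k ≤ m → r' k = r k) → sat I φ r' m
  | .know i φ, r, m => ∀ r' ∈ I.runs, ∀ m', I.sim i (r', m') (r, m) → sat I φ r' m'

/-- `I ⊨ φ` : satisfaction at time `0` of every run. -/
def valid (I : IS S P A) (φ : Formula P A) : Prop := ∀ r ∈ I.runs, sat I φ r 0

/-- `I ⊆ I'` : same states and interpretation, fewer runs, and the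
indistinguishability relations of `I` are the restrictions of those of `I'`. -/
def Subsystem (I I' : IS S P A) : Prop :=
  I.runs ⊆ I'.runs ∧ I.intp = I'.intp ∧
  ∀ (i : A) (r : ℕ → S) (m : ℕ) (r' : ℕ → S) (m' : ℕ), r ∈ I.runs → r' ∈ I.runs →
    (I.sim i (r, m) (r', m') ↔ I'.sim i (r, m) (r', m'))

/-- `okPol φ b` : when `φ` occurs in a context of polarity `b`
(`true` = under an even number of negations), every occurrence of a
knowledge operator or of the branching operator `all` in `φ` is in
positive position (under an even number of negations overall). -/
def okPol : Formula P A → Bool → Prop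
  | .atom _, _ => True
  | .neg φ, b => okPol φ (!b)
  | .or φ ψ, b => okPol φ b ∧ okPol ψ b
  | .next φ, b => okPol φ b
  | .untl φ ψ, b => okPol φ b ∧ okPol ψ b
  | .all φ, b => b = true ∧ okPol φ b
  | .know _ φ, b => b = true ∧ okPol φ b

/-- Every occurrence of a knowledge operator `K_i` and of the branching
operator `A` in `φ` is in positive position. -/
def Positive (φ : Formula P A) : Prop := okPol φ true

/-- Derived operators. -/
def Formula.and (φ ψ : Formula P A) : Formula P A := .neg (.or (.neg φ) (.neg ψ))

def Formula.imp (φ ψ : Formula P A) : Formula P A := .or (.neg φ) ψ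

def Formula.iff (φ ψ : Formula P A) : Formula P A := Formula.and (φ.imp ψ) (ψ.imp φ)

/-- The truth constant, expressed in the base syntax. -/
def ttF [Inhabited P] : Formula P A := .or (.atom default) (.neg (.atom default))

/-- `F φ = true U φ`. -/
def Ff [Inhabited P] (φ : Formula P A) : Formula P A := .untl ttF φ

/-- `G φ = ¬ F ¬ φ`. -/
def Gf [Inhabited P] (φ : Formula P A) : Formula P A := .neg (Ff (.neg φ))

/-- `AG φ = A (G φ)`. -/
def AGf [Inhabited P] (φ : Formula P A) : Formula P A := .all (Gf φ)

/-- `AX φ = A (X φ)`. -/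
def AXf (φ : Formula P A) : Formula P A := .all (.next φ)

/-- The fragment CTLK⁺. -/
inductive CTLKp (P A : Type) : Type
  | atom : P → CTLKp P A
  | natom : P → CTLKp P A
  | or : CTLKp P A → CTLKp P A → CTLKp P A
  | and : CTLKp P A → CTLKp P A → CTLKp P A
  | ax : CTLKp P A → CTLKp P A
  | af : CTLKp P A → CTLKp P A
  | ag : CTLKp P A → CTLKp P A
  | au : CTLKp P A → CTLKp P A → CTLKp P A
  | ar : CTLKp P A → CTLKp P A → CTLKp P A
  | know : A → CTLKp P A → CTLKp P A

/-- Expansion of a CTLK⁺ formula into the base CTL*K syntax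
(`AX φ = A X φ`, `AF φ = A (true U φ)`, `AG φ = A ¬(true U ¬φ)`,
`A(φ R ψ) = A ¬((¬φ) U (¬ψ))`, `φ ∧ ψ = ¬(¬φ ∨ ¬ψ)`). -/
def CTLKp.toFormula [Inhabited P] : CTLKp P A → Formula P A
  | .atom p => .atom p
  | .natom p => .neg (.atom p)
  | .or φ ψ => .or φ.toFormula ψ.toFormula
  | .and φ ψ => Formula.and φ.toFormula ψ.toFormula
  | .ax φ => .all (.next φ.toFormula)
  | .af φ => .all (Ff φ.toFormula)
  | .ag φ => .all (Gf φ.toFormula)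
  | .au φ ψ => .all (.untl φ.toFormula ψ.toFormula)
  | .ar φ ψ => .all (.neg (.untl (.neg φ.toFormula) (.neg ψ.toFormula)))
  | .know i φ => .know i φ.toFormula

/-- `φ` is (the expansion of) a formula of the fragment CTLK⁺. -/
def InCTLKplus [Inhabited P] (φ : Formula P A) : Prop :=
  ∃ c : CTLKp P A, c.toFormula = φ

/-- Boolean (purely propositional) formulas. -/
inductive BForm (P : Type) : Type
  | atom : P → BForm P
  | neg : BForm P → BForm P
  | or : BForm P → BForm P → BForm P

/-- Truth of a boolean formula under an assignment (set of true propositions). -/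
def BForm.eval (v : Set P) : BForm P → Prop
  | .atom p => p ∈ v
  | .neg φ => ¬ φ.eval v
  | .or φ ψ => φ.eval v ∨ ψ.eval v

/-- The atomic propositions occurring in a boolean formula. -/
def BForm.atoms : BForm P → Set P
  | .atom p => {p}
  | .neg φ => φ.atoms
  | .or φ ψ => φ.atoms ∪ ψ.atoms

/-- A boolean formula regarded as a CTL*K formula. -/
def BForm.toFormula : BForm P → Formula P A
  | .atom p => .atom p
  | .neg φ => .neg φ.toFormula
  | .or φ ψ => .or φ.toFormula ψ.toFormula

/-- The falsum constant `¬(p ∨ ¬p)`, expressed as a boolean formula. -/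
def ffB [Inhabited P] : BForm P := .neg (.or (.atom default) (.neg (.atom default)))

/-- Conjunction of boolean formulas. -/
def bAnd (φ ψ : BForm P) : BForm P := .neg (.or (.neg φ) (.neg ψ))

end EpiSyn
namespace EpiSyn

variable {S P A Act Obs X : Type}

/-- An environment: initial states, a set of actions for each agent
(containing `skip`), a serial transition relation labelled by joint actions
(with the all-`skip` joint action acting as identity), an observation
function for each agent, and an interpretation of atomic propositions. -/
structure Env (S P A Act Obs : Type) where
  init : Set S
  acts : A → Set Act
  skip : Act
  skip_mem : ∀ i, skip ∈ acts i
  tr : S → (A → Act) → S → Prop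
  serial : ∀ s (a : A → Act), (∀ i, a i ∈ acts i) → ∃ t, tr s a t
  skip_loop : ∀ s t, tr s (fun _ => skip) t ↔ s = t
  obs : A → S → Obs
  intp : S → Set P

/-- Proposition `p` is local to agent `i`: its truth depends only on `i`'s observation. -/
def LocalProp (E : Env S P A Act Obs) (i : A) (p : P) : Prop :=
  ∀ s t, E.obs i s = E.obs i t → (p ∈ E.intp s ↔ p ∈ E.intp t)

/-- A boolean formula is local to agent `i` if all its propositions are. -/
def LocalBForm (E : Env S P A Act Obs) (i : A) (φ : BForm P) : Prop :=
  ∀ p ∈ φ.atoms, LocalProp E i p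

/-- A concrete protocol for one agent: a finite list of guarded clauses `φ → a`. -/
abbrev Proto (P Act : Type) := List (BForm P × Act)

/-- Well-formedness of a joint concrete protocol: clause actions belong to the
agent's action set and guards are local to the agent. -/
def ProtocolWF (E : Env S P A Act Obs) (Q : A → Proto P Act) : Prop :=
  ∀ i, ∀ c ∈ Q i, c.2 ∈ E.acts i ∧ LocalBForm E i c.1

/-- The set of actions enabled by protocol `Pi` at state `s`: the actions of
clauses whose guard holds at `s`; if no guard holds, just `skip`. -/
def en (E : Env S P A Act Obs) (Pi : Proto P Act) (s : S) : Set Act :=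
  {α | (∃ c ∈ Pi, c.2 = α ∧ c.1.eval (E.intp s)) ∨
       (α = E.skip ∧ ∀ c ∈ Pi, ¬ c.1.eval (E.intp s))}

/-- Runs of the joint protocol `Q` in the environment `E`. -/
def sysRuns (E : Env S P A Act Obs) (Q : A → Proto P Act) : Set (ℕ → S) :=
  {r | r 0 ∈ E.init ∧
    ∀ n, ∃ a : A → Act, (∀ i, a i ∈ en E (Q i) (r n)) ∧ E.tr (r n) a (r (n + 1))}

/-- The interpreted system `𝓘(E, Q)` generated by running joint protocol `Q`
in environment `E`, with the observational semantics for knowledge. -/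
def sysIS (E : Env S P A Act Obs) (Q : A → Proto P Act) : IS S P A where
  runs := sysRuns E Q
  sim := fun i p q => E.obs i (p.1 p.2) = E.obs i (q.1 q.2)
  intp := E.intp
  sim_refl := fun _ _ _ _ => rfl
  sim_symm := fun _ _ _ _ _ h => h.symm
  sim_trans := fun _ _ _ _ _ _ _ h h' => h.trans h'

/-- A protocol template for one agent: guards are boolean formulas over the
atomic propositions together with boolean template variables from `X`. -/
abbrev ProtoT (P X Act : Type) := List (BForm (P ⊕ X) × Act)

/-- Well-formedness of a joint protocol template with variable-ownership map
`owner`: clause actions belong to the agent's action set, the atomic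
propositions in guards of agent `i`'s template are local to `i`, and the
template variables occurring in it are owned by `i` (so the variable sets of
distinct agents are disjoint). -/
def TemplateWF (E : Env S P A Act Obs) (owner : X → A)
    (Pt : A → ProtoT P X Act) : Prop :=
  ∀ i, ∀ c ∈ Pt i, c.2 ∈ E.acts i ∧
    ∀ q ∈ c.1.atoms, Sum.elim (fun p => LocalProp E i p) (fun x => owner x = i) q

/-- Application of a (total) substitution to a template guard. -/
def substB (θ : X → BForm P) : BForm (P ⊕ X) → BForm P
  | .atom (.inl p) => .atom p
  | .atom (.inr x) => θ x
  | .neg φ => .neg (substB θ φ)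
  | .or φ ψ => .or (substB θ φ) (substB θ ψ)

/-- Application of a (total) substitution to a joint protocol template,
yielding a joint concrete protocol `Pθ`. -/
def substT (θ : X → BForm P) (Pt : A → ProtoT P X Act) : A → Proto P Act :=
  fun i => (Pt i).map (fun c => (substB θ c.1, c.2))

/-- Application of a (total) substitution to a CTL*K formula over `Prop ∪ X`. -/
def substF (θ : X → BForm P) : Formula (P ⊕ X) A → Formula P A
  | .atom (.inl p) => .atom p
  | .atom (.inr x) => (θ x).toFormula
  | .neg φ => .neg (substF θ φ)
  | .or φ ψ => .or (substF θ φ) (substF θ ψ)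
  | .next φ => .next (substF θ φ)
  | .untl φ ψ => .untl (substF θ φ) (substF θ ψ)
  | .all φ => .all (substF θ φ)
  | .know i φ => .know i (substF θ φ)

/-- A total substitution is well-formed if it assigns to each template
variable a boolean formula local to the agent owning that variable. -/
def SubstWF (E : Env S P A Act Obs) (owner : X → A) (θ : X → BForm P) : Prop :=
  ∀ x, LocalBForm E (owner x) (θ x)

/-- A partial substitution is well-formed if every assigned formula is local
to the agent owning the corresponding variable. -/
def PSubstWF (E : Env S P A Act Obs) (owner : X → A) (θ : X → Option (BForm P)) : Prop :=
  ∀ x b, θ x = some b → LocalBForm E (owner x) b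

end EpiSyn
namespace EpiSyn

section Aux
variable {S P A : Type}

lemma subsystem_refl (I : IS S P A) : Subsystem I I :=
  ⟨subset_rfl, rfl, fun _ _ _ _ _ _ _ => Iff.rfl⟩

lemma subsystem_trans {I J K : IS S P A} (h1 : Subsystem I J) (h2 : Subsystem J K) :
    Subsystem I K := by
  refine ⟨h1.1.trans h2.1, h1.2.1.trans h2.2.1, fun i r m r' m' hr hr' => ?_⟩
  exact (h1.2.2 i r m r' m' hr hr').trans (h2.2.2 i r m r' m' (h1.1 hr) (h1.1 hr'))

/-- Polarity-sensitive monotonicity of satisfaction along subsystems. -/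
lemma sat_mono {I I' : IS S P A} (h : Subsystem I I') :
    ∀ (φ : Formula P A) (b : Bool) (r : ℕ → S) (m : ℕ), r ∈ I.runs → okPol φ b →
      cond b (sat I' φ r m → sat I φ r m) (sat I φ r m → sat I' φ r m) := by
  intro φ
  induction φ with
  | atom p =>
    intro b r m hr _
    have : I.intp = I'.intp := h.2.1
    cases b <;> simp [sat, this]
  | neg φ ih =>
    intro b r m hr hok
    have := ih (!b) r m hr hok
    cases b <;> simp_all [sat] <;> tauto
  | or φ ψ ihφ ihψ =>
    intro b r m hr hok
    have h1 := ihφ b r m hr hok.1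
    have h2 := ihψ b r m hr hok.2
    cases b <;> simp_all [sat] <;> tauto
  | next φ ih =>
    intro b r m hr hok
    have := ih b r (m + 1) hr hok
    cases b <;> simp_all [sat]
  | untl φ ψ ihφ ihψ =>
    intro b r m hr hok
    cases b <;> simp only [cond] <;>
      · rintro ⟨m', hm, hψ, hφ⟩
        refine ⟨m', hm, ?_, fun j hj1 hj2 => ?_⟩
        · have := ihψ _ r m' hr hok.2; simp_all
        · have := ihφ _ r j hr hok.1; have := hφ j hj1 hj2; simp_all
  | all φ ih =>
    intro b r m hr hok
    obtain ⟨hb, hok⟩ := hok; subst hb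
    simp only [cond]
    intro H r' hr' hag
    exact (ih true r' m hr' hok) (H r' (h.1 hr') hag)
  | know i φ ih =>
    intro b r m hr hok
    obtain ⟨hb, hok⟩ := hok; subst hb
    simp only [cond]
    intro H r' hr' m' hsim
    exact (ih true r' m' hr' hok)
      (H r' (h.1 hr') m' ((h.2.2 i r' m' r m hr' hr).mp hsim))

lemma okPol_bform (f : BForm P) : ∀ b : Bool, okPol (f.toFormula (A := A)) b := by
  induction f with
  | atom p => intro b; trivial
  | neg g ih => intro b; exact ih (!b)
  | or g h ihg ihh => intro b; exact ⟨ihg b, ihh b⟩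

lemma okPol_substF {X : Type} (θ : X → BForm P) :
    ∀ (φ : Formula (P ⊕ X) A) (b : Bool), okPol φ b → okPol (substF θ φ) b := by
  intro φ
  induction φ with
  | atom q =>
    intro b _
    rcases q with p | x
    · simp [substF, okPol]
    · exact okPol_bform (θ x) b
  | neg φ ih => intro b hok; exact ih (!b) hok
  | or φ ψ ihφ ihψ => intro b hok; exact ⟨ihφ b hok.1, ihψ b hok.2⟩
  | next φ ih => intro b hok; exact ih b hok
  | untl φ ψ ihφ ihψ => intro b hok; exact ⟨ihφ b hok.1, ihψ b hok.2⟩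
  | all φ ih => intro b hok; exact ⟨hok.1, ih b hok.2⟩
  | know i φ ih => intro b hok; exact ⟨hok.1, ih b hok.2⟩

lemma sat_ttF [Inhabited P] (I : IS S P A) (r : ℕ → S) (m : ℕ) :
    sat I (ttF) r m := by
  simp only [ttF, sat]
  exact Classical.em _

lemma sat_Gf [Inhabited P] (I : IS S P A) (φ : Formula P A) (r : ℕ → S) (m : ℕ) :
    sat I (Gf φ) r m ↔ ∀ m', m ≤ m' → sat I φ r m' := by
  simp only [Gf, Ff, sat]
  constructor
  · intro H m' hm
    by_contra hc
    exact H ⟨m', hm, hc, fun j _ _ => sat_ttF I r j⟩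
  · rintro H ⟨m', hm, hφ, _⟩
    exact hφ (H m' hm)

lemma sat_imp (I : IS S P A) (φ ψ : Formula P A) (r : ℕ → S) (m : ℕ) :
    sat I (Formula.imp φ ψ) r m ↔ (sat I φ r m → sat I ψ r m) := by
  simp only [Formula.imp, sat]; tauto

lemma sat_iff (I : IS S P A) (φ ψ : Formula P A) (r : ℕ → S) (m : ℕ) :
    sat I (Formula.iff φ ψ) r m ↔ (sat I φ r m ↔ sat I ψ r m) := by
  simp only [Formula.iff, Formula.and, Formula.imp, sat]; tauto

lemma chain_sub {k : ℕ} (Isys : Fin (k + 1) → IS S P A)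
    (hchain : ∀ j : Fin k, Subsystem (Isys j.succ) (Isys j.castSucc)) :
    ∀ j : Fin (k + 1), Subsystem (Isys (Fin.last k)) (Isys j) := by
  suffices H : ∀ d jv (hj : jv < k + 1), jv + d = k →
      Subsystem (Isys (Fin.last k)) (Isys ⟨jv, hj⟩) by
    intro j
    have := H (k - j.val) j.val j.isLt (by omega)
    simpa using this
  intro d
  induction d with
  | zero =>
    intro jv hj hjk
    have : (⟨jv, hj⟩ : Fin (k + 1)) = Fin.last k := by
      apply Fin.ext; simpa using by omega
    rw [this]; exact subsystem_refl _
  | succ d ih =>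
    intro jv hj hjk
    have hk : jv < k := by omega
    have h1 := hchain ⟨jv, hk⟩
    have h2 := ih (jv + 1) (by omega) (by omega)
    have e1 : (⟨jv, hk⟩ : Fin k).succ = (⟨jv + 1, by omega⟩ : Fin (k + 1)) := rfl
    have e2 : (⟨jv, hk⟩ : Fin k).castSucc = (⟨jv, hj⟩ : Fin (k + 1)) := rfl
    rw [e1, e2] at h1
    exact subsystem_trans h2 h1

end Aux

/-- Proposition `prop:approx` of the paper. Let
`S = ⟨Ags, E, P, Φ_κ⟩` be a sound local proposition epistemic protocol
specification (`κ x = K_{owner x} (ψκ x)`) such that every `κ(x)` contains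
knowledge operators and the branching operator `A` only in positive position.
Let `X₁, …, X_k` be a partition of the template variables (given by
`level : X → Fin k`, with `x ∈ X_{level x + 1}`), `θ` a total substitution,
and `𝓘₀ ⊇ 𝓘₁ ⊇ … ⊇ 𝓘_k` interpreted systems over the states of `E` with
`𝓘_k = 𝓘(E, Pθ)`, such that for each `j` and each `x ∈ X_j` we have
`𝓘_{j-1} ⊨ AG(θ(x) ⇔ κ(x)θ)`. Then `θ` implements `S`:
`𝓘(E,Pθ) ⊨ AG(θ(x) ⇒ κ(x)θ)` for every `x`. -/
theorem ordered_synthesis_implements {S P A Act Obs X : Type}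
    [Inhabited P] [Finite S] [Finite P] [Finite A] [Finite Act]
    (E : Env S P A Act Obs) (owner : X → A)
    (Pt : A → ProtoT P X Act) (hPt : TemplateWF E owner Pt)
    (ψκ : X → Formula (P ⊕ X) A)
    (hpos : ∀ x : X, Positive (Formula.know (owner x) (ψκ x)))
    (θ : X → BForm P) (hθ : SubstWF E owner θ)
    (k : ℕ) (level : X → Fin k)
    (Isys : Fin (k + 1) → IS S P A)
    (hchain : ∀ j : Fin k, Subsystem (Isys j.succ) (Isys j.castSucc))
    (hlast : Isys (Fin.last k) = sysIS E (substT θ Pt))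
    (hstep : ∀ x : X, valid (Isys (level x).castSucc)
      (AGf (Formula.iff ((θ x).toFormula)
        (substF θ (Formula.know (owner x) (ψκ x)))))) :
    ∀ x : X, valid (sysIS E (substT θ Pt))
      (AGf (Formula.imp ((θ x).toFormula)
        (substF θ (Formula.know (owner x) (ψκ x))))) := by
  intro x r hr
  rw [← hlast] at hr ⊢
  set Ik := Isys (Fin.last k) with hIk
  set Ij := Isys (level x).castSucc with hIj
  have hsub : Subsystem Ik Ij := chain_sub Isys hchain _
  -- unfold AGf = all (Gf ...)
  show sat Ik (.all (Gf _)) r 0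
  intro r' hr' _
  rw [sat_Gf]
  intro m _
  rw [sat_imp]
  intro hθx
  have hr'j : r' ∈ Ij.runs := hsub.1 hr'
  -- bring the fixpoint fact at Ij
  have hfix : sat Ij (Formula.iff ((θ x).toFormula)
      (substF θ (Formula.know (owner x) (ψκ x)))) r' m := by
    have h0 := hstep x r' hr'j
    have h1 : sat Ij (.all (Gf (Formula.iff ((θ x).toFormula)
        (substF θ (Formula.know (owner x) (ψκ x)))))) r' 0 := h0
    have h2 := h1 r' hr'j (fun _ _ => rfl)
    exact (sat_Gf Ij _ r' 0).mp h2 m (Nat.zero_le m)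
  -- transfer θ(x) up to Ij
  have hθxj : sat Ij ((θ x).toFormula) r' m := by
    have := sat_mono hsub ((θ x).toFormula) false r' m hr' (okPol_bform _ false)
    exact this hθx
  have hκj : sat Ij (substF θ (Formula.know (owner x) (ψκ x))) r' m :=
    ((sat_iff Ij _ _ r' m).mp hfix).mp hθxj
  -- transfer κ(x)θ down to Ik
  have hok : okPol (substF θ (Formula.know (owner x) (ψκ x))) true :=
    okPol_substF θ _ true (hpos x)
  exact (sat_mono hsub _ true r' m hr' hok) hκj

end EpiSyn
end

section
/- Let E be an environment, P a joint protocol, i an agent, φ₀ a boolean formula local to agent i, and ψ any CTL*K formula. Then 𝓘(E,P) ⊨ AG(φ₀ ⇒ K_iψ) if and only if 𝓘(E,P) ⊨ AG(φ₀ ⇒ ψ). -/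
namespace EpiSyn

theorem sat_bform {S P A : Type} (I : IS S P A) (φ : BForm P) (r : ℕ → S) (m : ℕ) :
    sat I (φ.toFormula) r m ↔ φ.eval (I.intp (r m)) := by
  induction φ with
  | atom p => simp [BForm.toFormula, BForm.eval, sat]
  | neg φ ih => simp [BForm.toFormula, BForm.eval, sat, ih]
  | or φ ψ ih1 ih2 => simp [BForm.toFormula, BForm.eval, sat, ih1, ih2]

theorem local_eval {S P A Act Obs : Type} (E : Env S P A Act Obs) (i : A) (φ : BForm P)
    (h : LocalBForm E i φ) (s t : S) (ho : E.obs i s = E.obs i t) :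
    φ.eval (E.intp s) ↔ φ.eval (E.intp t) := by
  induction φ with
  | atom p => exact h p (by simp [BForm.atoms]) s t ho
  | neg φ ih =>
      simp only [BForm.eval]
      exact not_congr (ih (fun p hp => h p (by simpa [BForm.atoms] using hp)))
  | or φ ψ ih1 ih2 =>
      simp only [BForm.eval]
      exact or_congr (ih1 (fun p hp => h p (by simp [BForm.atoms]; exact Or.inl hp)))
        (ih2 (fun p hp => h p (by simp [BForm.atoms]; exact Or.inr hp)))

theorem valid_AG {S P A : Type} [Inhabited P] (I : IS S P A) (χ : Formula P A) :
    valid I (AGf χ) ↔ ∀ r ∈ I.runs, ∀ m, sat I χ r m := by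
  constructor
  · intro h r hr m
    have := h r hr
    simp only [AGf, Gf, Ff, ttF, sat] at this
    have h2 := this r hr (fun _ _ => rfl)
    by_contra hc
    exact h2 ⟨m, Nat.zero_le m, hc, fun k _ _ => by tauto⟩
  · intro h r hr
    simp only [AGf, Gf, Ff, ttF, sat, valid]
    intro r' hr' _ ⟨m', _, hneg, _⟩
    exact hneg (h r' hr' m')

/-- footnote 1 of the paper. For a joint protocol `P` in an
environment `E`, an agent `i`, a boolean formula `φ₀` local to agent `i`, and
any CTL*K formula `ψ`:
`𝓘(E,P) ⊨ AG(φ₀ ⇒ K_i ψ)` iff `𝓘(E,P) ⊨ AG(φ₀ ⇒ ψ)`. -/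
theorem local_implies_know_iff_implies {S P A Act Obs : Type}
    [Inhabited P] [Finite S] [Finite P] [Finite A] [Finite Act]
    (E : Env S P A Act Obs) (Q : A → Proto P Act) (hQ : ProtocolWF E Q)
    (i : A) (φ₀ : BForm P) (hφ₀ : LocalBForm E i φ₀)
    (ψ : Formula P A) :
    valid (sysIS E Q) (AGf (Formula.imp (φ₀.toFormula) (Formula.know i ψ))) ↔
      valid (sysIS E Q) (AGf (Formula.imp (φ₀.toFormula) ψ)) := by
  rw [valid_AG, valid_AG]
  simp only [Formula.imp, sat]
  constructor
  · intro h r hr m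
    rcases h r hr m with h0 | hk
    · exact Or.inl h0
    · exact Or.inr (hk r hr m rfl)
  · intro h r hr m
    by_cases h0 : sat (sysIS E Q) φ₀.toFormula r m
    · refine Or.inr ?_
      intro r' hr' m' hsim
      have hsim' : E.obs i (r' m') = E.obs i (r m) := hsim
      have h0' : sat (sysIS E Q) φ₀.toFormula r' m' := by
        rw [sat_bform] at h0 ⊢
        exact (local_eval E i φ₀ hφ₀ _ _ hsim').mpr h0
      rcases h r' hr' m' with hc | hψ
      · exact absurd h0' hc
      · exact hψ
    · exact Or.inl h0

end EpiSyn
end
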